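/- Best orthonormal approximation within a subspace: let F ⊂ ℝ^m be a k-dimensional subspace and y₁,...,y_k ∈ ℝ^m orthonormal vectors. Then there exist orthonormal vectors v₁,...,v_k ∈ F such that Σ_{i=1}^k ‖y_i − v_i‖² ≤ 2 Σ_{i=1}^k dist²(y_i, F), where dist(y,F) is the Euclidean distance from y to F. -/

import Mathlib

noncomputable def eucEnorm {m : ℕ} (v : Fin m → ℝ) : ℝ := Real.sqrt (∑ i, v i ^ 2)

/-- Euclidean distance from a vector to a subspace of `ℝ^m`. -/
noncomputable def distSub {m : ℕ} (y : Fin m → ℝ) (F : Submodule ℝ (Fin m → ℝ)) : ℝ :=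
  ⨅ f : F, eucEnorm (y - (f : Fin m → ℝ))

/-!
Let `w i` be the orthogonal projection of `y i` onto `F`. For unit vectors `v i ∈ F` we have
`‖y i - v i‖² = 2 - 2⟪w i, v i⟫` and `dist(y i, F)² = 1 - ‖w i‖²`, so it suffices to find an
orthonormal basis `v` of `F` with `∑ ‖w i‖² ≤ ∑ ⟪w i, v i⟫`. For the contraction
`T : ℝᵏ → F`, `eᵢ ↦ w i`, this reads `tr (T†T) ≤ tr (T†V)` for a linear isometry `V : ℝᵏ ≃ F`.
Take for `V` the isometry of the polar decomposition `T = V |T|`: it sends an eigenbasis `qⱼ`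
of `T†T` to the normalisations of the pairwise orthogonal vectors `T qⱼ`, so that
`tr (T†V) = ∑ ‖T qⱼ‖ ≥ ∑ ‖T qⱼ‖² = tr (T†T)` because every `‖T qⱼ‖ ≤ 1`.
-/

open scoped InnerProductSpace RealInnerProductSpace
open Module

theorem Orthonormal.exists_linearIsometry_euclideanSpace {𝕜 ι E : Type*} [RCLike 𝕜] [Fintype ι]
    [NormedAddCommGroup E] [InnerProductSpace 𝕜 E] {y : ι → E} (hy : Orthonormal 𝕜 y) :
    ∃ Y : EuclideanSpace 𝕜 ι →ₗᵢ[𝕜] E, ∀ i, Y (EuclideanSpace.basisFun ι 𝕜 i) = y i := by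
  set e := EuclideanSpace.basisFun ι 𝕜
  have hLe : ∀ i, e.toBasis.constr 𝕜 y (e i) = y i := fun i => by
    rw [← OrthonormalBasis.coe_toBasis, Basis.constr_basis]
  have hL : Orthonormal 𝕜 (e.toBasis.constr 𝕜 y ∘ e.toBasis) := by
    rw [OrthonormalBasis.coe_toBasis, show ⇑(e.toBasis.constr 𝕜 y) ∘ ⇑e = y from funext hLe]
    exact hy
  exact ⟨(e.toBasis.constr 𝕜 y).isometryOfOrthonormal
    (by rw [OrthonormalBasis.coe_toBasis]; exact e.orthonormal) hL, hLe⟩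

section

variable {ι E F : Type*} [Fintype ι]
  [NormedAddCommGroup E] [InnerProductSpace ℝ E] [NormedAddCommGroup F] [InnerProductSpace ℝ F]

theorem LinearMap.trace_adjoint_comp_eq_sum_inner [FiniteDimensional ℝ E] [FiniteDimensional ℝ F]
    (A B : E →ₗ[ℝ] F) (b : OrthonormalBasis ι ℝ E) :
    (A.adjoint ∘ₗ B).trace ℝ E = ∑ i, ⟪A (b i), B (b i)⟫ := by
  simp only [LinearMap.trace_eq_sum_inner _ b, LinearMap.comp_apply, LinearMap.adjoint_inner_right]

theorem exists_orthonormalBasis_inner_eq_norm [FiniteDimensional ℝ F]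
    (hF : finrank ℝ F = Fintype.card ι) {w : ι → F} (hw : Pairwise fun i j => ⟪w i, w j⟫ = 0) :
    ∃ b : OrthonormalBasis ι ℝ F, ∀ i, ⟪w i, b i⟫ = ‖w i‖ := by
  classical
  have hu : Orthonormal ℝ ({i | w i ≠ 0}.domRestrict fun i => ‖w i‖⁻¹ • w i) := by
    rw [orthonormal_iff_ite]
    rintro ⟨i, hi⟩ ⟨j, hj⟩
    simp only [Set.domRestrict_apply, real_inner_smul_left, real_inner_smul_right,
      Subtype.mk.injEq]
    split_ifs with h
    · subst h
      rw [real_inner_self_eq_norm_sq]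
      field_simp [norm_ne_zero_iff.2 hi]
    · rw [hw h, mul_zero, mul_zero]
  obtain ⟨b, hb⟩ := hu.exists_orthonormalBasis_extension_of_card_eq hF
  refine ⟨b, fun i => ?_⟩
  by_cases hi : w i = 0
  · simp [hi]
  · rw [hb i hi, real_inner_smul_right, real_inner_self_eq_norm_sq]
    field_simp [norm_ne_zero_iff.2 hi]

theorem LinearMap.exists_linearIsometryEquiv_trace_adjoint_comp_self_le
    [FiniteDimensional ℝ E] [FiniteDimensional ℝ F] (T : E →ₗ[ℝ] F) (hT : ∀ x, ‖T x‖ ≤ ‖x‖)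
    (hEF : finrank ℝ E = finrank ℝ F) :
    ∃ V : E ≃ₗᵢ[ℝ] F, (T.adjoint ∘ₗ T).trace ℝ E ≤ (T.adjoint ∘ₗ V.toLinearMap).trace ℝ E := by
  set q := T.isSymmetric_adjoint_comp_self.eigenvectorBasis rfl
  have horth : Pairwise fun i j => ⟪T (q i), T (q j)⟫ = 0 := by
    intro i j hij
    rw [← LinearMap.adjoint_inner_right, ← LinearMap.comp_apply,
      LinearMap.IsSymmetric.apply_eigenvectorBasis, real_inner_smul_right,
      q.orthonormal.inner_eq_zero hij, mul_zero]
  obtain ⟨b, hb⟩ := exists_orthonormalBasis_inner_eq_norm (by simp [← hEF]) horth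
  refine ⟨q.equiv b (Equiv.refl _), ?_⟩
  rw [trace_adjoint_comp_eq_sum_inner _ _ q, trace_adjoint_comp_eq_sum_inner _ _ q]
  refine Finset.sum_le_sum fun i _ => ?_
  have hTq : ‖T (q i)‖ ≤ 1 := (hT _).trans_eq (q.orthonormal.norm_eq_one i)
  rw [real_inner_self_eq_norm_sq, LinearEquiv.coe_coe, LinearIsometryEquiv.coe_toLinearEquiv,
    OrthonormalBasis.equiv_apply_basis, Equiv.refl_apply, hb]
  nlinarith [norm_nonneg (T (q i))]

theorem Orthonormal.exists_orthonormal_mem_sum_norm_sub_sq_le {K : Submodule ℝ E}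
    [FiniteDimensional ℝ K] (hK : finrank ℝ K = Fintype.card ι) {y : ι → E}
    (hy : Orthonormal ℝ y) :
    ∃ v : ι → E, Orthonormal ℝ v ∧ (∀ i, v i ∈ K) ∧
      ∑ i, ‖y i - v i‖ ^ 2 ≤ 2 * ∑ i, ‖y i - K.starProjection (y i)‖ ^ 2 := by
  set e := EuclideanSpace.basisFun ι ℝ
  obtain ⟨Y, hYe⟩ := hy.exists_linearIsometry_euclideanSpace
  set T := K.orthogonalProjectionOnto.toLinearMap ∘ₗ Y.toLinearMap
  have hT : ∀ x, ‖T x‖ ≤ ‖x‖ := fun x =>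
    (K.norm_orthogonalProjectionOnto_apply_le (Y x)).trans_eq (Y.norm_map x)
  have hTe : ∀ i, T (e i) = K.orthogonalProjectionOnto (y i) := fun i => by
    simp [T, e, hYe]
  obtain ⟨V, hV⟩ := T.exists_linearIsometryEquiv_trace_adjoint_comp_self_le hT (by simp [hK])
  rw [LinearMap.trace_adjoint_comp_eq_sum_inner _ _ e,
    LinearMap.trace_adjoint_comp_eq_sum_inner _ _ e] at hV
  simp only [real_inner_self_eq_norm_sq, LinearEquiv.coe_coe,
    LinearIsometryEquiv.coe_toLinearEquiv] at hV
  have hdist : ∀ i, ‖y i - K.starProjection (y i)‖ ^ 2 = 1 - ‖T (e i)‖ ^ 2 := fun i => by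
    have hpyth := K.norm_sq_eq_add_norm_sq_starProjection (y i)
    rw [hy.norm_eq_one, K.starProjection_orthogonal_val] at hpyth
    rw [hTe, Submodule.coe_norm, ← Submodule.starProjection_apply]
    linarith
  have happrox : ∀ i, ‖y i - V (e i)‖ ^ 2 = 2 - 2 * ⟪T (e i), V (e i)⟫ := fun i => by
    rw [hTe, Submodule.inner_orthogonalProjectionOnto_eq_of_mem_right, norm_sub_sq_real,
      hy.norm_eq_one, ← Submodule.coe_norm, V.norm_map, e.orthonormal.norm_eq_one]
    ring
  refine ⟨fun i => V (e i), ?_, fun i => (V (e i)).2, ?_⟩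
  · exact (e.orthonormal.comp_linearIsometryEquiv V).comp_linearIsometry K.subtypeₗᵢ
  · simp only [hdist, happrox, Finset.sum_sub_distrib, ← Finset.mul_sum, Finset.sum_const,
      nsmul_eq_mul]
    linarith

end

theorem eucEnorm_eq_norm {m : ℕ} (v : Fin m → ℝ) : eucEnorm v = ‖WithLp.toLp 2 v‖ := by
  simp [eucEnorm, EuclideanSpace.norm_eq]

theorem sum_mul_eq_inner_toLp {m : ℕ} (a b : Fin m → ℝ) :
    ∑ p, a p * b p = ⟪WithLp.toLp 2 a, WithLp.toLp 2 b⟫ := by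
  simp [EuclideanSpace.inner_toLp_toLp, dotProduct, mul_comm]

theorem distSub_eq_norm_sub_starProjection {m : ℕ} (y : Fin m → ℝ)
    (F : Submodule ℝ (Fin m → ℝ)) :
    distSub y F = ‖WithLp.toLp 2 y -
      (F.comap (WithLp.linearEquiv 2 ℝ (Fin m → ℝ)).toLinearMap).starProjection
        (WithLp.toLp 2 y)‖ := by
  rw [Submodule.starProjection_minimal, distSub]
  have hsurj : Function.Surjective fun f : F => (⟨WithLp.toLp 2 f, f.2⟩ :
      F.comap (WithLp.linearEquiv 2 ℝ (Fin m → ℝ)).toLinearMap) :=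
    fun v => ⟨⟨WithLp.ofLp (v : EuclideanSpace ℝ (Fin m)), v.2⟩, rfl⟩
  simpa only [eucEnorm_eq_norm, WithLp.toLp_sub] using
    hsurj.iInf_comp fun v => ‖WithLp.toLp 2 y - v‖

/-- Best orthonormal approximation within a subspace: for a `k`-dimensional subspace
`F ⊂ ℝ^m` and orthonormal `y₁,...,y_k`, there exist orthonormal `v₁,...,v_k ∈ F` with
`Σ ‖y_i − v_i‖² ≤ 2 Σ dist²(y_i, F)`. -/
theorem stmt19 {m k : ℕ} (F : Submodule ℝ (Fin m → ℝ)) (hF : Module.finrank ℝ F = k)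
    (y : Fin k → Fin m → ℝ)
    (hy : ∀ i j, ∑ p, y i p * y j p = if i = j then (1:ℝ) else 0) :
    ∃ v : Fin k → Fin m → ℝ, (∀ i, v i ∈ F) ∧
      (∀ i j, ∑ p, v i p * v j p = if i = j then (1:ℝ) else 0) ∧
      ∑ i, eucEnorm (y i - v i) ^ 2 ≤ 2 * ∑ i, (distSub (y i) F) ^ 2 := by
  have hK : finrank ℝ (F.comap (WithLp.linearEquiv 2 ℝ (Fin m → ℝ)).toLinearMap) =
      Fintype.card (Fin k) := by
    rw [Submodule.comap_equiv_eq_map_symm, LinearEquiv.finrank_map_eq, hF, Fintype.card_fin]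
  have hyE : Orthonormal ℝ fun i => WithLp.toLp 2 (y i) :=
    orthonormal_iff_ite.2 fun i j => (sum_mul_eq_inner_toLp _ _).symm.trans (hy i j)
  obtain ⟨v, hv, hvK, hle⟩ := hyE.exists_orthonormal_mem_sum_norm_sub_sq_le hK
  refine ⟨fun i => WithLp.ofLp (v i), hvK, fun i j => ?_, ?_⟩
  · rw [sum_mul_eq_inner_toLp]
    exact orthonormal_iff_ite.1 hv i j
  · simpa only [eucEnorm_eq_norm, distSub_eq_norm_sub_starProjection, WithLp.toLp_sub,
      WithLp.toLp_ofLp] using hle
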